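/- arXiv:1907.03438 — 4 statements merged into one kernel-verified Lean document; each statement's English description precedes it below -/
import Mathlib

section
/- Let m(φ,k) := √(2π) i^k e^{iφk/2} J_k(4|g| sin(φ/2)) for a fixed real g ≠ 0, where J_k is the Bessel function of the first kind. Then for each k, the function φ ↦ m(φ,k) on [-π,π] has only finitely many zeros; consequently the multiplication operator M_m on L²([-π,π]×ℤ) is injective. -/
/-!
Write `u(φ) = 4|g| sin(φ/2)`. Since `J_{-n} = ±J_n` and `J_n(z) = (z/2)^n E_n(z²)` with
`E_n(w) = ∑_j (-w/4)^j / (j! (n+j)!)` entire and `E_n(0) = 1/n!`, the zeros of `m(·,k)` are zeros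
of `u` or of `E_{|k|} ∘ u²`. Both are real-analytic on `ℝ` and not identically zero (`u(π) ≠ 0` as
`g ≠ 0`, and `E_n(u(0)²) ≠ 0`), so each has finitely many zeros in a compact set. Finite sets are
Lebesgue-null, hence `m(·,k) f_k = 0` a.e. forces `f_k = 0` a.e.
-/

open Complex

/-- Bessel function of the first kind of nonnegative integer order `n`,
defined by its power series `J_n(z) = ∑_{j≥0} (−1)^j (z/2)^{n+2j}/(j!(n+j)!)`. -/
noncomputable def besselJNat (n : ℕ) (z : ℂ) : ℂ :=
  ∑' j : ℕ, (-1) ^ j * (z / 2) ^ (n + 2 * j) /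
    ((Nat.factorial j : ℂ) * (Nat.factorial (n + j) : ℂ))

/-- Bessel function of the first kind of integer order `k`, with
`J_{−n}(z) = (−1)^n J_n(z)`. -/
noncomputable def besselJ (k : ℤ) (z : ℂ) : ℂ :=
  if 0 ≤ k then besselJNat k.toNat z
  else (-1) ^ (-k).toNat * besselJNat (-k).toNat z

/-- The multiplier function m(φ,k) = √(2π) i^k e^{iφk/2} J_k(4|g| sin(φ/2)). -/
noncomputable def multiplier (g : ℝ) (φ : ℝ) (k : ℤ) : ℂ :=
  (Real.sqrt (2 * Real.pi) : ℂ) * Complex.I ^ k *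
    Complex.exp (Complex.I * φ * k / 2) *
    besselJ k ((4 * |g| * Real.sin (φ / 2) : ℝ) : ℂ)

open Filter MeasureTheory

theorem AnalyticOnNhd.finite_zeros_of_isCompact {𝕜 E : Type*} [NontriviallyNormedField 𝕜]
    [ConnectedSpace 𝕜] [NormedAddCommGroup E] [NormedSpace 𝕜 E] {f : 𝕜 → E}
    (hf : AnalyticOnNhd 𝕜 f Set.univ) {x₀ : 𝕜} (hx₀ : f x₀ ≠ 0) {K : Set 𝕜} (hK : IsCompact K) :
    {x ∈ K | f x = 0}.Finite :=
  hK.finite_sdiff_of_mem_codiscreteWithin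
    (codiscreteWithin_mono K.subset_univ (hf.preimage_zero_mem_codiscrete hx₀)) |>.subset
    fun _ hx ↦ ⟨hx.1, fun h ↦ h hx.2⟩

theorem Filter.eventuallyEq_zero_of_eventually_mul_eq_zero {α M₀ : Type*} [MulZeroClass M₀]
    [NoZeroDivisors M₀] {l : Filter α} {m f : α → M₀} (hm : ∀ᶠ x in l, m x ≠ 0)
    (h : ∀ᶠ x in l, m x * f x = 0) : f =ᶠ[l] 0 := by
  filter_upwards [hm, h] with x hmx hx
  exact (mul_eq_zero.mp hx).resolve_left hmx

theorem MeasureTheory.ae_restrict_ne_zero_of_finite_zeros {α M₀ : Type*} [MeasurableSpace α]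
    [Zero M₀] {μ : Measure α} [NullSingletonClass μ] {s : Set α} (hs : MeasurableSet s) {m : α → M₀}
    (h : {x ∈ s | m x = 0}.Finite) : ∀ᵐ x ∂μ.restrict s, m x ≠ 0 := by
  rw [ae_restrict_iff' hs]
  filter_upwards [measure_eq_zero_iff_ae_notMem.mp (h.measure_zero μ)] with x hx hxs hmx
  exact hx ⟨hxs, hmx⟩

noncomputable def besselReducedCoeff (n j : ℕ) : ℂ :=
  (-1) ^ j / ((4 : ℂ) ^ j * (j.factorial : ℂ) * ((n + j).factorial : ℂ))

noncomputable def besselReduced (n : ℕ) : ℂ → ℂ :=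
  FormalMultilinearSeries.ofScalarsSum (besselReducedCoeff n)

section besselReduced

variable (n : ℕ)

theorem norm_besselReducedCoeff_le (j : ℕ) : ‖besselReducedCoeff n j‖ ≤ (j.factorial : ℝ)⁻¹ := by
  have h4 : (1 : ℝ) ≤ 4 ^ j := one_le_pow₀ (by norm_num)
  have hnj : (1 : ℝ) ≤ (n + j).factorial := mod_cast (n + j).factorial_pos
  have hj : (0 : ℝ) < j.factorial := mod_cast j.factorial_pos
  simp only [besselReducedCoeff, norm_div, norm_pow, norm_neg, norm_one, one_pow, norm_mul,
    Complex.norm_natCast, Complex.norm_ofNat]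
  rw [one_div]
  refine inv_anti₀ hj ?_
  calc (j.factorial : ℝ) = 1 * j.factorial * 1 := by ring
    _ ≤ 4 ^ j * j.factorial * (n + j).factorial := by gcongr

theorem radius_ofScalars_besselReducedCoeff :
    (FormalMultilinearSeries.ofScalars ℂ (besselReducedCoeff n)).radius = ⊤ := by
  refine FormalMultilinearSeries.radius_eq_top_of_summable_norm _ fun r ↦ ?_
  refine (Real.summable_pow_div_factorial r).of_nonneg_of_le (fun _ ↦ by positivity) fun j ↦ ?_
  rw [FormalMultilinearSeries.ofScalars_norm, div_eq_inv_mul]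
  gcongr
  exact norm_besselReducedCoeff_le n j

theorem analyticOnNhd_besselReduced : AnalyticOnNhd ℂ (besselReduced n) Set.univ := by
  have h := (FormalMultilinearSeries.ofScalars ℂ (besselReducedCoeff n)).analyticOnNhd
  rwa [radius_ofScalars_besselReducedCoeff, Metric.eball_top] at h

theorem besselReduced_zero : besselReduced n 0 = (n.factorial : ℂ)⁻¹ := by
  simp [besselReduced, besselReducedCoeff]

theorem besselJNat_eq_mul_besselReduced (z : ℂ) :
    besselJNat n z = (z / 2) ^ n * besselReduced n (z ^ 2) := by
  rw [besselReduced, FormalMultilinearSeries.ofScalars_sum_eq, ← tsum_mul_left, besselJNat]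
  refine tsum_congr fun j ↦ ?_
  rw [besselReducedCoeff, smul_eq_mul, pow_add, pow_mul, div_pow z 2 2, div_pow (z ^ 2)]
  norm_num
  field_simp

end besselReduced

theorem besselJ_eq_zero_iff (k : ℤ) (z : ℂ) : besselJ k z = 0 ↔ besselJNat k.natAbs z = 0 := by
  unfold besselJ
  split_ifs with hk
  · rw [show k.toNat = k.natAbs by omega]
  · rw [show (-k).toNat = k.natAbs by omega, mul_eq_zero, or_iff_right (by simp)]

theorem multiplier_eq_zero_iff (g φ : ℝ) (k : ℤ) :
    multiplier g φ k = 0 ↔ besselJ k ((4 * |g| * Real.sin (φ / 2) : ℝ) : ℂ) = 0 := by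
  have hsqrt : Real.sqrt Real.pi ≠ 0 := Real.sqrt_ne_zero'.mpr Real.pi_pos
  simp [multiplier, hsqrt, Complex.exp_ne_zero, zpow_ne_zero k Complex.I_ne_zero]

theorem finite_zeros_multiplier {g : ℝ} (hg : g ≠ 0) (k : ℤ) {K : Set ℝ} (hK : IsCompact K) :
    {φ ∈ K | multiplier g φ k = 0}.Finite := by
  set u : ℝ → ℂ := fun φ ↦ ((4 * |g| * Real.sin (φ / 2) : ℝ) : ℂ)
  have hu : AnalyticOnNhd ℝ u Set.univ := fun φ _ ↦
    Complex.ofRealCLM.analyticAt _ |>.comp (analyticAt_const.mul (Real.analyticAt_sin.comp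
      (analyticAt_id.div_const)))
  have hE : AnalyticOnNhd ℝ (fun φ ↦ besselReduced k.natAbs (u φ ^ 2)) Set.univ := fun φ _ ↦
    (analyticOnNhd_besselReduced _ _ trivial).restrictScalars.comp ((hu φ trivial).pow 2)
  have hu_pi : u Real.pi ≠ 0 := by simp [u, hg]
  have hE_zero : besselReduced k.natAbs (u 0 ^ 2) ≠ 0 := by
    simp [u, besselReduced_zero, Nat.factorial_ne_zero]
  refine ((hu.finite_zeros_of_isCompact hu_pi hK).union
    (hE.finite_zeros_of_isCompact hE_zero hK)).subset fun φ ⟨hφK, hφ⟩ ↦ ?_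
  rw [multiplier_eq_zero_iff, besselJ_eq_zero_iff, besselJNat_eq_mul_besselReduced, mul_eq_zero,
    pow_eq_zero_iff', div_eq_zero_iff] at hφ
  rcases hφ with ⟨hu0 | htwo, -⟩ | hE0
  · exact Or.inl ⟨hφK, hu0⟩
  · exact absurd htwo two_ne_zero
  · exact Or.inr ⟨hφK, hE0⟩

/-- For fixed real g ≠ 0 and each k, the function φ ↦ m(φ,k) has only
finitely many zeros on [-π,π]; consequently the multiplication operator M_m on
L²([-π,π]×ℤ) is injective. -/
theorem multiplier_finitely_many_zeros_and_injective (g : ℝ) (hg : g ≠ 0) :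
    (∀ k : ℤ, {φ ∈ Set.Icc (-Real.pi) Real.pi | multiplier g φ k = 0}.Finite)
    ∧ (∀ f : ℤ → ℝ → ℂ,
        (∀ k : ℤ, ∀ᵐ φ ∂(MeasureTheory.volume.restrict (Set.Icc (-Real.pi) Real.pi)),
          multiplier g φ k * f k φ = 0) →
        ∀ k : ℤ, f k =ᵐ[MeasureTheory.volume.restrict (Set.Icc (-Real.pi) Real.pi)] 0) := by
  have hfin (k : ℤ) : {φ ∈ Set.Icc (-Real.pi) Real.pi | multiplier g φ k = 0}.Finite :=
    finite_zeros_multiplier hg k isCompact_Icc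
  exact ⟨hfin, fun f hf k ↦ eventuallyEq_zero_of_eventually_mul_eq_zero
    (ae_restrict_ne_zero_of_finite_zeros measurableSet_Icc (hfin k)) (hf k)⟩
end

section
/- Discrepancy principle convergence rate: Let T : X → Y be bounded linear between Hilbert spaces, 𝒞 ⊆ X, f† ∈ 𝒞 with ‖Tf† − y‖ < δ. Let f̂ minimize ‖Tf − y‖² + α‖f‖² over 𝒞, and suppose δ ≤ ‖T f̂ − y‖ ≤ τδ for some τ > 1. If f† satisfies the variational source condition (1/4)‖f − f†‖² ≤ (1/2)‖f‖² − (1/2)‖f†‖² + ψ(‖Tf − Tf†‖²) for all f ∈ 𝒞, with ψ concave, increasing, ψ(0)=0, then ‖f̂ − f†‖ ≤ 2(1+τ)√(ψ(δ²)). -/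
lemma concave_subhom_aux (ψ : ℝ → ℝ) (hconc : ConcaveOn ℝ (Set.Ici 0) ψ)
    (h0 : ψ 0 = 0) (c t : ℝ) (hc : 1 ≤ c) (ht : 0 ≤ t) : ψ (c * t) ≤ c * ψ t := by
  have hc0 : 0 < c := lt_of_lt_of_le one_pos hc
  have hct : (0:ℝ) ≤ c * t := mul_nonneg hc0.le ht
  have h1c : 1/c ≤ 1 := by rw [div_le_one hc0]; exact hc
  have h := hconc.2 (Set.mem_Ici.2 hct) (Set.mem_Ici.2 (le_refl (0:ℝ)))
    (show (0:ℝ) ≤ 1/c by positivity) (show (0:ℝ) ≤ 1 - 1/c by linarith)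
    (show 1/c + (1 - 1/c) = 1 by ring)
  simp only [smul_eq_mul, mul_zero, add_zero, h0] at h
  have ht' : (1/c) * (c * t) = t := by field_simp
  rw [ht'] at h
  calc ψ (c * t) = c * ((1/c) * ψ (c * t)) := by field_simp
    _ ≤ c * ψ t := by nlinarith

/-- Convergence rate of constrained Tikhonov regularization under the
discrepancy principle and a variational source condition. -/
theorem discrepancy_principle_rate
    {X Y : Type*} [NormedAddCommGroup X] [InnerProductSpace ℂ X] [CompleteSpace X]
    [NormedAddCommGroup Y] [InnerProductSpace ℂ Y] [CompleteSpace Y]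
    (T : X →L[ℂ] Y) (C : Set X) (fdag fhat : X) (y : Y) (δ α τ : ℝ)
    (hfdag : fdag ∈ C) (hfhat : fhat ∈ C)
    (hδ : 0 < δ) (hα : 0 < α) (hτ : 1 < τ)
    (hnoise : ‖T fdag - y‖ < δ)
    (hmin : ∀ f ∈ C, ‖T fhat - y‖^2 + α * ‖fhat‖^2 ≤ ‖T f - y‖^2 + α * ‖f‖^2)
    (hdisc₁ : δ ≤ ‖T fhat - y‖) (hdisc₂ : ‖T fhat - y‖ ≤ τ * δ)
    (ψ : ℝ → ℝ)
    (hconc : ConcaveOn ℝ (Set.Ici 0) ψ)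
    (hmono : MonotoneOn ψ (Set.Ici 0))
    (hnonneg : ∀ t, 0 ≤ t → 0 ≤ ψ t)
    (h0 : ψ 0 = 0)
    (hVSC : ∀ f ∈ C,
      (1/4) * ‖f - fdag‖^2 ≤ (1/2) * ‖f‖^2 - (1/2) * ‖fdag‖^2 + ψ (‖T f - T fdag‖^2)) :
    ‖fhat - fdag‖ ≤ 2 * (1 + τ) * Real.sqrt (ψ (δ^2)) := by
  -- ‖fhat‖ ≤ ‖fdag‖
  have hmin' := hmin fdag hfdag
  have hT1 : ‖T fdag - y‖^2 < δ^2 := by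
    have := norm_nonneg (T fdag - y)
    nlinarith
  have hT2 : δ^2 ≤ ‖T fhat - y‖^2 := by nlinarith
  have hnorm : ‖fhat‖^2 ≤ ‖fdag‖^2 := by nlinarith
  -- bound on data misfit
  have hTd : ‖T fhat - T fdag‖ ≤ (1 + τ) * δ := by
    calc ‖T fhat - T fdag‖ = ‖(T fhat - y) - (T fdag - y)‖ := by
          rw [sub_sub_sub_cancel_right]
      _ ≤ ‖T fhat - y‖ + ‖T fdag - y‖ := norm_sub_le _ _
      _ ≤ (1 + τ) * δ := by nlinarith
  have hTd2 : ‖T fhat - T fdag‖^2 ≤ (1 + τ)^2 * δ^2 := by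
    nlinarith [norm_nonneg (T fhat - T fdag)]
  have hVSC' := hVSC fhat hfhat
  have hψmono : ψ (‖T fhat - T fdag‖^2) ≤ ψ ((1 + τ)^2 * δ^2) := by
    apply hmono (Set.mem_Ici.2 (sq_nonneg _)) _ hTd2
    exact Set.mem_Ici.2 (by positivity)
  have hψsub : ψ ((1 + τ)^2 * δ^2) ≤ (1 + τ)^2 * ψ (δ^2) :=
    concave_subhom_aux ψ hconc h0 ((1+τ)^2) (δ^2) (by nlinarith) (sq_nonneg _)
  have key : ‖fhat - fdag‖^2 ≤ 4 * (1 + τ)^2 * ψ (δ^2) := by nlinarith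
  have hψnn : 0 ≤ ψ (δ^2) := hnonneg _ (sq_nonneg _)
  have hs : (0:ℝ) ≤ 2 * (1 + τ) * Real.sqrt (ψ (δ^2)) := by positivity
  have hsq : ‖fhat - fdag‖^2 ≤ (2 * (1 + τ) * Real.sqrt (ψ (δ^2)))^2 := by
    have := Real.sq_sqrt hψnn
    nlinarith
  calc ‖fhat - fdag‖ = Real.sqrt (‖fhat - fdag‖^2) := (Real.sqrt_sq (norm_nonneg _)).symm
    _ ≤ Real.sqrt ((2 * (1 + τ) * Real.sqrt (ψ (δ^2)))^2) := Real.sqrt_le_sqrt hsq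
    _ = 2 * (1 + τ) * Real.sqrt (ψ (δ^2)) := Real.sqrt_sq hs
end

section
/- Conditional stability from a variational source condition: if every f† in a set 𝒦 ⊆ X satisfies (1/4)‖f − f†‖² ≤ (1/2)‖f‖² − (1/2)‖f†‖² + ψ(‖Tf − Tf†‖²) for all f ∈ X, then for all f₁, f₂ ∈ 𝒦, ‖f₁ − f₂‖ ≤ 2√(ψ(‖Tf₁ − Tf₂‖²)). -/
/-- Conditional stability from a variational source condition. -/
theorem conditional_stability_from_vsc
    {X Y : Type*} [NormedAddCommGroup X] [InnerProductSpace ℂ X] [CompleteSpace X]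
    [NormedAddCommGroup Y] [InnerProductSpace ℂ Y] [CompleteSpace Y]
    (T : X →L[ℂ] Y) (K : Set X) (ψ : ℝ → ℝ)
    (hψ0 : ψ 0 = 0) (hψcont : Continuous ψ) (hψmono : StrictMonoOn ψ (Set.Ici 0))
    (hψnonneg : ∀ t, 0 ≤ t → 0 ≤ ψ t)
    (hVSC : ∀ fdag ∈ K, ∀ f : X,
      (1/4) * ‖f - fdag‖^2 ≤ (1/2) * ‖f‖^2 - (1/2) * ‖fdag‖^2 + ψ (‖T f - T fdag‖^2)) :
    ∀ f₁ ∈ K, ∀ f₂ ∈ K, ‖f₁ - f₂‖ ≤ 2 * Real.sqrt (ψ (‖T f₁ - T f₂‖^2)) := by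
  intro f₁ h₁ f₂ h₂
  have hA := hVSC f₁ h₁ f₂
  have hB := hVSC f₂ h₂ f₁
  have e1 : ‖f₂ - f₁‖ = ‖f₁ - f₂‖ := norm_sub_rev _ _
  have e2 : ‖T f₂ - T f₁‖ = ‖T f₁ - T f₂‖ := norm_sub_rev _ _
  rw [e1, e2] at hA
  have key : ‖f₁ - f₂‖ ^ 2 ≤ 4 * ψ (‖T f₁ - T f₂‖ ^ 2) := by nlinarith [hA, hB]
  have hψpos : 0 ≤ ψ (‖T f₁ - T f₂‖ ^ 2) := hψnonneg _ (sq_nonneg _)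
  have := Real.sqrt_le_sqrt key
  rw [Real.sqrt_sq (norm_nonneg _)] at this
  calc ‖f₁ - f₂‖ ≤ Real.sqrt (4 * ψ (‖T f₁ - T f₂‖ ^ 2)) := this
    _ = 2 * Real.sqrt (ψ (‖T f₁ - T f₂‖ ^ 2)) := by
        rw [show (4:ℝ) = 2^2 by norm_num, Real.sqrt_mul (sq_nonneg 2), Real.sqrt_sq (by norm_num)]
end

section
/- Sufficient criterion for variational source conditions: Let T : X → Y be bounded linear between Hilbert spaces, f† ∈ X, and for ε in an index set ℐ ⊂ (0,∞) let P_ε be orthogonal projections onto subspaces V_ε with ‖(I − P_ε)f†‖ ≤ κ_ε, inf_ε κ_ε = 0, and ⟨P_ε f†, f† − f⟩ ≤ σ_ε ‖Tf† − Tf‖ for all f ∈ X. Then f† satisfies (1/4)‖f − f†‖² ≤ (1/2)‖f‖² − (1/2)‖f†‖² + ψ(‖Tf − Tf†‖²) for all f ∈ X, with ψ(t) = inf_{ε∈ℐ} [σ_ε √t + κ_ε²]. -/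
open scoped InnerProductSpace
open RCLike

/-! Expanding the square gives `½‖f‖² - ½‖f†‖² = ½‖f - f†‖² - re ⟪f†, f† - f⟫`. Splitting
`f† = P_ε f† + (f† - P_ε f†)` bounds the inner product by `σ_ε ‖T f - T f†‖ + κ_ε ‖f - f†‖`,
and Young's inequality `κ a ≤ a²/4 + κ²` absorbs the last term into a quarter of the square. -/

section

variable {𝕜 E : Type*} [RCLike 𝕜] [NormedAddCommGroup E] [InnerProductSpace 𝕜 E]

theorem half_norm_sq_sub_half_norm_sq (f g : E) :
    (1/2) * ‖f‖^2 - (1/2) * ‖g‖^2 = (1/2) * ‖f - g‖^2 - re ⟪g, g - f⟫_𝕜 := by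
  have hexpand := norm_add_sq (𝕜 := 𝕜) g (f - g)
  rw [add_sub_cancel, ← neg_sub g f, inner_neg_right, map_neg, norm_neg, norm_sub_rev g f] at hexpand
  linarith

theorem re_inner_le_re_inner_add_norm_sub_mul_norm (g p h : E) :
    re ⟪g, h⟫_𝕜 ≤ re ⟪p, h⟫_𝕜 + ‖g - p‖ * ‖h‖ := by
  have hsplit : re ⟪g, h⟫_𝕜 = re ⟪p, h⟫_𝕜 + re ⟪g - p, h⟫_𝕜 := by
    rw [← map_add, ← inner_add_left, add_sub_cancel]
  rw [hsplit]
  gcongr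
  exact re_inner_le_norm _ _

theorem quarter_norm_sq_sub_le_of_re_inner_le {f g : E} {s κ : ℝ}
    (h : re ⟪g, g - f⟫_𝕜 ≤ s + κ * ‖f - g‖) :
    (1/4) * ‖f - g‖^2 ≤ (1/2) * ‖f‖^2 - (1/2) * ‖g‖^2 + (s + κ^2) := by
  rw [half_norm_sq_sub_half_norm_sq (𝕜 := 𝕜)]
  have young : κ * ‖f - g‖ ≤ (1/4) * ‖f - g‖^2 + κ^2 := by
    nlinarith [sq_nonneg (κ - ‖f - g‖ / 2)]
  linarith

end

theorem vsc_sufficient_criterion_general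
    {X Y : Type*} [NormedAddCommGroup X] [InnerProductSpace ℂ X]
    [NormedAddCommGroup Y] [InnerProductSpace ℂ Y]
    (T : X →L[ℂ] Y) (fdag : X)
    (I : Set ℝ) (hIne : I.Nonempty)
    (P : ℝ → X →L[ℂ] X)
    (κ σ : ℝ → ℝ)
    (happrox : ∀ ε ∈ I, ‖fdag - P ε fdag‖ ≤ κ ε)
    (hsc : ∀ ε ∈ I, ∀ f : X,
      (⟪P ε fdag, fdag - f⟫_ℂ).re ≤ σ ε * ‖T fdag - T f‖) :
    ∀ f : X,
      (1/4) * ‖f - fdag‖^2 ≤ (1/2) * ‖f‖^2 - (1/2) * ‖fdag‖^2 +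
        ⨅ ε : I, (σ ε * Real.sqrt (‖T f - T fdag‖^2) + κ ε ^ 2) := by
  intro f
  have : Nonempty I := hIne.to_subtype
  rw [Real.sqrt_sq (norm_nonneg _), ← sub_le_iff_le_add']
  refine le_ciInf fun ⟨ε, hε⟩ => sub_le_iff_le_add'.mpr
    (quarter_norm_sq_sub_le_of_re_inner_le (𝕜 := ℂ) ?_)
  calc re ⟪fdag, fdag - f⟫_ℂ
      ≤ re ⟪P ε fdag, fdag - f⟫_ℂ + ‖fdag - P ε fdag‖ * ‖fdag - f‖ :=
        re_inner_le_re_inner_add_norm_sub_mul_norm _ _ _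
    _ ≤ σ ε * ‖T f - T fdag‖ + κ ε * ‖f - fdag‖ := by
        rw [norm_sub_rev (T f), norm_sub_rev f]
        exact add_le_add (hsc ε hε f) (mul_le_mul_of_nonneg_right (happrox ε hε) (norm_nonneg _))

/-- Sufficient criterion for variational source conditions via a family of
orthogonal projections P_ε (self-adjoint idempotents), approximation numbers κ_ε with
inf κ_ε = 0, and ⟨P_ε f†, f† − f⟩ ≤ σ_ε ‖Tf† − Tf‖. Then the VSC holds with
ψ(t) = inf_ε [σ_ε √t + κ_ε²]. -/
theorem vsc_sufficient_criterion
    {X Y : Type*} [NormedAddCommGroup X] [InnerProductSpace ℂ X] [CompleteSpace X]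
    [NormedAddCommGroup Y] [InnerProductSpace ℂ Y] [CompleteSpace Y]
    (T : X →L[ℂ] Y) (fdag : X)
    (I : Set ℝ) (hI : I ⊆ Set.Ioi 0) (hIne : I.Nonempty)
    (P : ℝ → X →L[ℂ] X)
    (hproj : ∀ ε ∈ I, (∀ x : X, P ε (P ε x) = P ε x) ∧
      (∀ x y : X, ⟪P ε x, y⟫_ℂ = ⟪x, P ε y⟫_ℂ))
    (κ σ : ℝ → ℝ)
    (hκpos : ∀ ε ∈ I, 0 < κ ε) (hσpos : ∀ ε ∈ I, 0 < σ ε)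
    (happrox : ∀ ε ∈ I, ‖fdag - P ε fdag‖ ≤ κ ε)
    (hinf : ∀ η > 0, ∃ ε ∈ I, κ ε < η)
    (hsc : ∀ ε ∈ I, ∀ f : X,
      (⟪P ε fdag, fdag - f⟫_ℂ).re ≤ σ ε * ‖T fdag - T f‖) :
    ∀ f : X,
      (1/4) * ‖f - fdag‖^2 ≤ (1/2) * ‖f‖^2 - (1/2) * ‖fdag‖^2 +
        ⨅ ε : I, (σ ε * Real.sqrt (‖T f - T fdag‖^2) + κ ε ^ 2) :=
  vsc_sufficient_criterion_general T fdag I hIne P κ σ happrox hsc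
end
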